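/- arXiv:2006.00916 — 6 statements merged into one kernel-verified Lean document; each statement's English description precedes it below -/
import Mathlib

section
/- (σ-Flows Properties, Theorem 1(c), line N) If q_N and q_S have opposite signs (q_N·q_S < 0) and x_N·|q_N| < x_S·|q_S| (i.e. |q_N/q_S| < x_S/x_N), then the σ-flow on line N has the same sign as the goods flow on line N, i.e. f^σ_N·q_N > 0; consequently |f^p_N| = |q_N| + |f^σ_N| > |q_N|, so line N faces a tighter capacity bound than in a goods network. -/
/-- **σ-Flows Properties (Theorem 1(c), line N).** If `qN·qS < 0` and
`xN·|qN| < xS·|qS|`, then the σ-flow on line N has the same sign as the goods flow on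
line N (`f^σ_N·qN > 0`); consequently `|f^p_N| = |qN| + |f^σ_N| > |qN|`, so line N faces
a tighter capacity bound than in a goods network. -/
theorem sigma_flow_tightens_north
    (xN xE xS xW : ℝ) (hxN : 0 < xN) (hxE : 0 < xE) (hxS : 0 < xS) (hxW : 0 < xW)
    (qN qS : ℝ) (hopp : qN * qS < 0) (hlt : xN * |qN| < xS * |qS|) :
    let Sx : ℝ := xN + xE + xS + xW
    let fpN : ℝ := ((xE + xS + xW) * qN - xS * qS) / Sx
    let fsN : ℝ := fpN - qN
    fsN * qN > 0 ∧ |fpN| = |qN| + |fsN| ∧ |fpN| > |qN| := by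
  intro Sx fpN fsN
  have hS : 0 < Sx := by positivity
  have hq : qN ≠ 0 := by
    rintro rfl; simp at hopp
  have hkey : fsN * qN > 0 := by
    have hfs : fsN = (-(xN * qN) - xS * qS) / Sx := by
      show ((xE + xS + xW) * qN - xS * qS) / Sx - qN = _
      field_simp
      ring
    rw [hfs, div_mul_eq_mul_div]
    apply div_pos _ hS
    have h1 : xN * |qN| * |qN| < xS * |qS| * |qN| := by
      apply mul_lt_mul_of_pos_right hlt
      exact abs_pos.mpr hq
    have h2 : |qN| * |qS| = -(qN * qS) := by
      rw [← abs_mul, abs_of_neg hopp]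
    nlinarith [sq_abs qN, abs_nonneg qN, abs_nonneg qS]
  refine ⟨hkey, ?_, ?_⟩
  · have hfp : fpN = fsN + qN := by show fpN = fpN - qN + qN; ring
    rw [hfp]
    rcases lt_or_gt_of_ne hq with h | h
    · have hfs : fsN < 0 := by nlinarith
      rw [abs_of_neg h, abs_of_neg hfs, abs_of_neg (by linarith)]
      ring
    · have hfs : 0 < fsN := by nlinarith
      rw [abs_of_pos h, abs_of_pos hfs, abs_of_pos (by linarith)]; ring
  · have hfsne : |fsN| > 0 := abs_pos.mpr (fun h0 => by rw [h0] at hkey; simp at hkey)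
    have hfp : fpN = fsN + qN := by show fpN = fpN - qN + qN; ring
    rw [hfp]
    rcases lt_or_gt_of_ne hq with h | h
    · have hfs : fsN < 0 := by nlinarith
      rw [abs_of_neg h, abs_of_neg (by linarith : fsN + qN < 0)]
      linarith
    · have hfs : 0 < fsN := by nlinarith
      rw [abs_of_pos h, abs_of_pos (by linarith : 0 < fsN + qN)]
      linarith
end

section
/- (σ-Flows Properties, Theorem 1(c), line S) If q_N and q_S have opposite signs (q_N·q_S < 0) and x_N·|q_N| > x_S·|q_S| (i.e. |q_N/q_S| > x_S/x_N), then the σ-flow on line S has the same sign as the goods flow on line S, i.e. f^σ_S·q_S > 0; consequently |f^p_S| = |q_S| + |f^σ_S| > |q_S|, so line S faces a tighter capacity bound than in a goods network. -/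
/-- **σ-Flows Properties (Theorem 1(c), line S).** If `qN·qS < 0` and
`xN·|qN| > xS·|qS|`, then the σ-flow on line S has the same sign as the goods flow on
line S (`f^σ_S·qS > 0`); consequently `|f^p_S| = |qS| + |f^σ_S| > |qS|`, so line S faces
a tighter capacity bound than in a goods network. -/
theorem sigma_flow_tightens_south
    (xN xE xS xW : ℝ) (hxN : 0 < xN) (hxE : 0 < xE) (hxS : 0 < xS) (hxW : 0 < xW)
    (qN qS : ℝ) (hopp : qN * qS < 0) (hgt : xN * |qN| > xS * |qS|) :
    let Sx : ℝ := xN + xE + xS + xW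
    let fpS : ℝ := (-xN * qN + (xN + xE + xW) * qS) / Sx
    let fsS : ℝ := fpS - qS
    fsS * qS > 0 ∧ |fpS| = |qS| + |fsS| ∧ |fpS| > |qS| := by
  intro Sx fpS fsS
  have hSx : 0 < Sx := by positivity
  have hqS : qS ≠ 0 := by rintro rfl; simp at hopp
  have habs : -(qN * qS) = |qN| * |qS| := by
    rw [← abs_mul, abs_of_neg hopp]
  have hqSabs : 0 < |qS| := abs_pos.mpr hqS
  have hfsS : fsS = (-(xN * (qN * qS)) - xS * qS ^ 2) / (Sx * qS) := by
    show fpS - qS = _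
    show (-xN * qN + (xN + xE + xW) * qS) / Sx - qS = _
    field_simp
    ring
  have hnum : 0 < -(xN * (qN * qS)) - xS * qS ^ 2 := by
    have h1 : -(xN * (qN * qS)) = xN * |qN| * |qS| := by
      rw [show xN * |qN| * |qS| = xN * (|qN| * |qS|) from by ring, ← habs]; ring
    have h2 : xS * qS ^ 2 = xS * |qS| * |qS| := by
      rw [show xS * |qS| * |qS| = xS * (|qS| * |qS|) from by ring, abs_mul_abs_self qS]; ring
    rw [h1, h2]
    nlinarith [hgt, hqSabs]
  have hkey : fsS * qS > 0 := by
    rw [hfsS, div_mul_eq_mul_div]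
    rcases lt_or_gt_of_ne hqS with h | h
    · apply div_pos_of_neg_of_neg
      · exact mul_neg_of_pos_of_neg hnum h
      · exact mul_neg_of_pos_of_neg hSx h
    · exact div_pos (mul_pos hnum h) (mul_pos hSx h)
  have hfp : fpS = fsS + qS := by show fpS = fpS - qS + qS; ring
  have hfsne : fsS ≠ 0 := by
    rintro h; rw [h] at hkey; simp at hkey
  have habs2 : |fpS| = |qS| + |fsS| := by
    rcases lt_or_gt_of_ne hqS with h | h
    · have hfs : fsS < 0 := by nlinarith
      rw [hfp, abs_of_neg (by linarith), abs_of_neg h, abs_of_neg hfs]; ring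
    · have hfs : 0 < fsS := by nlinarith
      rw [hfp, abs_of_pos (by linarith), abs_of_pos h, abs_of_pos hfs]; ring
  refine ⟨hkey, habs2, ?_⟩
  have : 0 < |fsS| := abs_pos.mpr hfsne
  linarith
end

section
/- (Trade Flow Equivalence, Corollary 1) The power flows equal the goods flows on all four lines (f^p_N = q_N, f^p_E = 0, f^p_S = q_S, f^p_W = 0) if and only if x_N·q_N + x_S·q_S = 0, i.e. q_S = −(x_N/x_S)·q_N. -/
/-- **Trade Flow Equivalence (Corollary 1).** The power flows equal the goods flows on
all four lines (`f^p_N = qN`, `f^p_E = 0`, `f^p_S = qS`, `f^p_W = 0`) if and only if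
`xN·qN + xS·qS = 0`, i.e. `qS = −(xN/xS)·qN`. -/
theorem trade_flow_equivalence
    (xN xE xS xW : ℝ) (hxN : 0 < xN) (hxE : 0 < xE) (hxS : 0 < xS) (hxW : 0 < xW)
    (qN qS : ℝ) :
    let Sx : ℝ := xN + xE + xS + xW
    let fpN : ℝ := ((xE + xS + xW) * qN - xS * qS) / Sx
    let fpE : ℝ := (-xN * qN - xS * qS) / Sx
    let fpS : ℝ := (-xN * qN + (xN + xE + xW) * qS) / Sx
    let fpW : ℝ := (xN * qN + xS * qS) / Sx
    ((fpN = qN ∧ fpE = 0 ∧ fpS = qS ∧ fpW = 0) ↔ xN * qN + xS * qS = 0) ∧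
    (xN * qN + xS * qS = 0 ↔ qS = -(xN / xS) * qN) := by
  intro Sx fpN fpE fpS fpW
  have hSx : Sx ≠ 0 := by positivity
  constructor
  · constructor
    · rintro ⟨-, h, -, -⟩
      have := (div_eq_iff hSx).mp h
      linarith
    · intro h
      have hN : xN * qN = -(xS * qS) := by linarith
      refine ⟨?_, ?_, ?_, ?_⟩ <;>
        · show _ / Sx = _
          rw [div_eq_iff hSx]
          simp only [Sx]
          ring_nf
          nlinarith [h]
  · constructor
    · intro h
      field_simp
      linarith
    · intro h
      have : xS * qS = -(xN * qN) := by
        rw [h]; field_simp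
      linarith
end

section
/- (Theorem 2, Case 1) In the symmetric-reactance case, if ((C_N + C_S)/(2·C_V))²·(x_H²/x_V²) + ((C_N − C_S)/(2·C_V))²·(x_H²/(x_H + x_V)²) ≤ 1, then F_P1 ∩ F_P3 ⊆ F_PV, and consequently the power-feasible set satisfies F_P = F_P1 ∩ F_P3 (the vertical-line capacity constraints are never binding). -/
/-- **Theorem 2, Case 1.** In the symmetric-reactance case (`xN = xS = xH`,
`xE = xW = xV`), if
`((CN + CS)/(2·CV))²·(xH²/xV²) + ((CN − CS)/(2·CV))²·(xH²/(xH + xV)²) ≤ 1`,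
then `F_P1 ∩ F_P3 ⊆ F_PV`, and consequently `F_P = F_P1 ∩ F_P3` (the vertical-line
capacity constraints are never binding). -/
theorem feasible_region_case1
    (xH xV CN CE CS CW : ℝ)
    (hxH : 0 < xH) (hxV : 0 < xV)
    (hCN : 0 < CN) (hCE : 0 < CE) (hCS : 0 < CS) (hCW : 0 < CW) :
    let Sx : ℝ := xH + xV + xH + xV
    let CV : ℝ := min CE CW
    let FP1 : Set (ℝ × ℝ) := {q | |((xV + xH + xV) * q.1 - xH * q.2) / Sx| ≤ CN}
    let FP2 : Set (ℝ × ℝ) := {q | |(-xH * q.1 - xH * q.2) / Sx| ≤ CE}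
    let FP3 : Set (ℝ × ℝ) := {q | |(-xH * q.1 + (xH + xV + xV) * q.2) / Sx| ≤ CS}
    let FP4 : Set (ℝ × ℝ) := {q | |(xH * q.1 + xH * q.2) / Sx| ≤ CW}
    let FPV : Set (ℝ × ℝ) := FP2 ∩ FP4
    ((CN + CS) / (2 * CV)) ^ 2 * (xH ^ 2 / xV ^ 2) +
        ((CN - CS) / (2 * CV)) ^ 2 * (xH ^ 2 / (xH + xV) ^ 2) ≤ 1 →
      FP1 ∩ FP3 ⊆ FPV ∧ FP1 ∩ FP2 ∩ FP3 ∩ FP4 = FP1 ∩ FP3 := by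
  intro Sx CV FP1 FP2 FP3 FP4 FPV h
  have hSx : (0:ℝ) < Sx := by show (0:ℝ) < xH + xV + xH + xV; linarith
  have hCV : (0:ℝ) < CV := lt_min hCE hCW
  -- first ellipse term is at most 1
  have hterm2 : 0 ≤ ((CN - CS) / (2 * CV)) ^ 2 * (xH ^ 2 / (xH + xV) ^ 2) := by
    positivity
  have h1 : ((CN + CS) / (2 * CV)) ^ 2 * (xH ^ 2 / xV ^ 2) ≤ 1 := by linarith
  have h2 : ((CN + CS) * xH) ^ 2 ≤ (2 * CV * xV) ^ 2 := by
    have hne1 : (2 * CV) ≠ 0 := by positivity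
    have hne2 : xV ≠ 0 := ne_of_gt hxV
    have hp : (0:ℝ) < (2 * CV) ^ 2 * xV ^ 2 := by positivity
    rw [div_pow, div_mul_div_comm, div_le_one hp] at h1
    nlinarith [h1]
  have key : (CN + CS) * xH ≤ 2 * CV * xV := by
    nlinarith [mul_pos (mul_pos two_pos hCV) hxV]
  -- main bound on the vertical flow
  have hsub : FP1 ∩ FP3 ⊆ FPV := by
    rintro ⟨q1, q2⟩ ⟨hA, hB⟩
    have hA : |((xV + xH + xV) * q1 - xH * q2) / Sx| ≤ CN := hA
    have hB : |(-xH * q1 + (xH + xV + xV) * q2) / Sx| ≤ CS := hB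
    have e : (xH * q1 + xH * q2) / Sx =
        (xH / (2 * xV)) * (((xV + xH + xV) * q1 - xH * q2) / Sx +
          (-xH * q1 + (xH + xV + xV) * q2) / Sx) := by
      field_simp
      ring
    have hbound : |(xH * q1 + xH * q2) / Sx| ≤ CV := by
      rw [e, abs_mul, abs_of_pos (by positivity : (0:ℝ) < xH / (2 * xV))]
      have habs : |((xV + xH + xV) * q1 - xH * q2) / Sx +
          (-xH * q1 + (xH + xV + xV) * q2) / Sx| ≤ CN + CS :=
        (abs_add_le _ _).trans (add_le_add hA hB)
      have := mul_le_mul_of_nonneg_left habs (by positivity : (0:ℝ) ≤ xH / (2 * xV))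
      refine this.trans ?_
      rw [div_mul_eq_mul_div, div_le_iff₀ (by positivity : (0:ℝ) < 2 * xV)]
      calc xH * (CN + CS) = (CN + CS) * xH := by ring
        _ ≤ 2 * CV * xV := key
        _ = CV * (2 * xV) := by ring
    constructor
    · show |(-xH * q1 - xH * q2) / Sx| ≤ CE
      have : (-xH * q1 - xH * q2) / Sx = -((xH * q1 + xH * q2) / Sx) := by ring
      rw [this, abs_neg]
      exact hbound.trans (min_le_left _ _)
    · show |(xH * q1 + xH * q2) / Sx| ≤ CW
      exact hbound.trans (min_le_right _ _)
  refine ⟨hsub, ?_⟩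
  ext q
  simp only [Set.mem_inter_iff]
  constructor
  · rintro ⟨⟨⟨h1, h2⟩, h3⟩, h4⟩; exact ⟨h1, h3⟩
  · rintro ⟨h1, h3⟩
    obtain ⟨h2, h4⟩ := hsub ⟨h1, h3⟩
    exact ⟨⟨⟨h1, h2⟩, h3⟩, h4⟩
end

section
/- (Corollary 2, quadrilateral case) In the fully symmetric case, if C_V/C_H ≥ x_H/x_V (equivalently C_V·x_V ≥ C_H·x_H), then F_P1 ∩ F_P3 ⊆ F_PV, and consequently the power-feasible set satisfies F_P = F_P1 ∩ F_P3 (a quadrilateral region). -/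
/-- **Corollary 2, quadrilateral case.** In the fully symmetric case
(`xN = xS = xH`, `xE = xW = xV`, `CN = CS = CH`, `CE = CW = CV`), if `CV/CH ≥ xH/xV`
(equivalently `CV·xV ≥ CH·xH`), then `F_P1 ∩ F_P3 ⊆ F_PV`, and consequently
`F_P = F_P1 ∩ F_P3` (a quadrilateral region). -/
theorem symmetric_feasible_quadrilateral
    (xH xV CH CV : ℝ)
    (hxH : 0 < xH) (hxV : 0 < xV) (hCH : 0 < CH) (hCV : 0 < CV)
    (hcond : CV / CH ≥ xH / xV) :
    let Sx : ℝ := xH + xV + xH + xV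
    let FP1 : Set (ℝ × ℝ) := {q | |((xV + xH + xV) * q.1 - xH * q.2) / Sx| ≤ CH}
    let FP2 : Set (ℝ × ℝ) := {q | |(-xH * q.1 - xH * q.2) / Sx| ≤ CV}
    let FP3 : Set (ℝ × ℝ) := {q | |(-xH * q.1 + (xH + xV + xV) * q.2) / Sx| ≤ CH}
    let FP4 : Set (ℝ × ℝ) := {q | |(xH * q.1 + xH * q.2) / Sx| ≤ CV}
    let FPV : Set (ℝ × ℝ) := FP2 ∩ FP4
    FP1 ∩ FP3 ⊆ FPV ∧ FP1 ∩ FP2 ∩ FP3 ∩ FP4 = FP1 ∩ FP3 := by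
  intro Sx FP1 FP2 FP3 FP4 FPV
  have hSx : (0:ℝ) < Sx := by
    have : Sx = xH + xV + xH + xV := rfl
    rw [this]; linarith
  have hmul : xH * CH ≤ CV * xV := by
    rw [ge_iff_le, div_le_div_iff₀ hxV hCH] at hcond
    exact hcond
  -- key: FP1 ∩ FP3 ⊆ FP4
  have key4 : ∀ q : ℝ × ℝ, q ∈ FP1 → q ∈ FP3 → q ∈ FP4 := by
    intro q h1 h3
    simp only [FP1, FP3, FP4, Set.mem_setOf_eq] at h1 h3 ⊢
    have heq : (2 * xV) * ((q.1 + q.2) / Sx)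
        = ((xV + xH + xV) * q.1 - xH * q.2) / Sx
          + (-xH * q.1 + (xH + xV + xV) * q.2) / Sx := by
      field_simp
      ring
    have hsum : |(2 * xV) * ((q.1 + q.2) / Sx)| ≤ 2 * CH := by
      rw [heq]
      calc |_ + _| ≤ _ + _ := abs_add_le _ _
        _ ≤ 2 * CH := by linarith
    rw [abs_mul, abs_of_pos (by linarith : (0:ℝ) < 2 * xV)] at hsum
    have habs : |(q.1 + q.2) / Sx| ≤ CH / xV := by
      rw [le_div_iff₀ hxV]
      nlinarith
    have heq2 : (xH * q.1 + xH * q.2) / Sx = xH * ((q.1 + q.2) / Sx) := by ring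
    rw [heq2, abs_mul, abs_of_pos hxH]
    calc xH * |(q.1 + q.2) / Sx| ≤ xH * (CH / xV) := by
          exact mul_le_mul_of_nonneg_left habs hxH.le
      _ ≤ CV := by
          rw [mul_div_assoc', div_le_iff₀ hxV]
          linarith
  have key2 : ∀ q : ℝ × ℝ, q ∈ FP1 → q ∈ FP3 → q ∈ FP2 := by
    intro q h1 h3
    have h4 := key4 q h1 h3
    simp only [FP2, Set.mem_setOf_eq]
    simp only [FP4, Set.mem_setOf_eq] at h4
    have : (-xH * q.1 - xH * q.2) / Sx = -((xH * q.1 + xH * q.2) / Sx) := by ring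
    rw [this, abs_neg]
    exact h4
  constructor
  · rintro q ⟨h1, h3⟩
    exact ⟨key2 q h1 h3, key4 q h1 h3⟩
  · ext q
    constructor
    · rintro ⟨⟨⟨h1, _⟩, h3⟩, _⟩
      exact ⟨h1, h3⟩
    · rintro ⟨h1, h3⟩
      exact ⟨⟨⟨h1, key2 q h1 h3⟩, h3⟩, key4 q h1 h3⟩
end

section
/- (Corollary 2, hexagon direction) In the fully symmetric case, if C_V/C_H < x_H/x_V (equivalently C_V·x_V < C_H·x_H), then the vertex V5 = ((x_H + x_V)·C_H/x_V, (x_H + x_V)·C_H/x_V) of F_P1 ∩ F_P3 does not belong to F_PV: the power flow it induces on the vertical lines has magnitude x_H·C_H/x_V > C_V, so the quadrilateral F_P1 ∩ F_P3 is not contained in F_PV and F_P is a strictly smaller (hexagonal) region. -/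
/-- **Corollary 2, hexagon direction.** In the fully symmetric case, if `CV/CH < xH/xV`,
then the vertex `V5 = ((xH + xV)·CH/xV, (xH + xV)·CH/xV)` of `F_P1 ∩ F_P3` does not
belong to `F_PV`: the power flow it induces on the vertical lines has magnitude
`xH·CH/xV > CV`, so the quadrilateral `F_P1 ∩ F_P3` is not contained in `F_PV` and
`F_P` is a strictly smaller (hexagonal) region. -/
theorem symmetric_feasible_hexagon
    (xH xV CH CV : ℝ)
    (hxH : 0 < xH) (hxV : 0 < xV) (hCH : 0 < CH) (hCV : 0 < CV)
    (hcond : CV / CH < xH / xV) :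
    let Sx : ℝ := xH + xV + xH + xV
    let FP1 : Set (ℝ × ℝ) := {q | |((xV + xH + xV) * q.1 - xH * q.2) / Sx| ≤ CH}
    let FP2 : Set (ℝ × ℝ) := {q | |(-xH * q.1 - xH * q.2) / Sx| ≤ CV}
    let FP3 : Set (ℝ × ℝ) := {q | |(-xH * q.1 + (xH + xV + xV) * q.2) / Sx| ≤ CH}
    let FP4 : Set (ℝ × ℝ) := {q | |(xH * q.1 + xH * q.2) / Sx| ≤ CV}
    let FPV : Set (ℝ × ℝ) := FP2 ∩ FP4
    let V5 : ℝ × ℝ := ((xH + xV) * CH / xV, (xH + xV) * CH / xV)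
    |(-xH * V5.1 - xH * V5.2) / Sx| = xH * CH / xV ∧
    xH * CH / xV > CV ∧
    V5 ∈ FP1 ∩ FP3 ∧
    V5 ∉ FPV ∧
    ¬ (FP1 ∩ FP3 ⊆ FPV) ∧
    FP1 ∩ FP2 ∩ FP3 ∩ FP4 ⊂ FP1 ∩ FP3 := by
  intro Sx FP1 FP2 FP3 FP4 FPV V5
  have hSx : Sx ≠ 0 := by simp only [Sx]; positivity
  have hxV' : xV ≠ 0 := ne_of_gt hxV
  have hE : (-xH * V5.1 - xH * V5.2) / Sx = -(xH * CH / xV) := by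
    simp only [V5, Sx]
    field_simp
    ring
  have hEabs : |(-xH * V5.1 - xH * V5.2) / Sx| = xH * CH / xV := by
    rw [hE, abs_neg, abs_of_pos (by positivity)]
  have hgt : xH * CH / xV > CV := by
    rw [gt_iff_lt, lt_div_iff₀ hxV]
    have := (div_lt_div_iff₀ hCH hxV).mp hcond
    linarith
  have h1 : ((xV + xH + xV) * V5.1 - xH * V5.2) / Sx = CH := by
    simp only [V5, Sx]; field_simp; ring
  have h3 : (-xH * V5.1 + (xH + xV + xV) * V5.2) / Sx = CH := by
    simp only [V5, Sx]; field_simp; ring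
  have hV13 : V5 ∈ FP1 ∩ FP3 := by
    constructor
    · show |((xV + xH + xV) * V5.1 - xH * V5.2) / Sx| ≤ CH
      rw [h1, abs_of_pos hCH]
    · show |(-xH * V5.1 + (xH + xV + xV) * V5.2) / Sx| ≤ CH
      rw [h3, abs_of_pos hCH]
  have hnot2 : V5 ∉ FP2 := by
    show ¬ |(-xH * V5.1 - xH * V5.2) / Sx| ≤ CV
    rw [hEabs]; exact not_le.mpr hgt
  have hnotV : V5 ∉ FPV := fun h => hnot2 h.1
  refine ⟨hEabs, hgt, hV13, hnotV, fun h => hnotV (h hV13), ?_⟩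
  constructor
  · intro q hq
    exact ⟨hq.1.1.1, hq.1.2⟩
  · intro h
    exact hnot2 (h hV13).1.1.2
end
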